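/- In A₁(F), the element x - y commutes with (x-y)^(2j) for every j ≥ 1, where (x-y)^(2j) denotes the substitution of x, y into the commutative expansion of (X-Y)^(2j); equivalently, [x - y, Σⱼ a_{2j} S̃_{2j}] = 0 for any finitely supported scalars a_{2j}, where S̃_{2j} is the image in A₁ of (X-Y)^{2j} ∈ F[X,Y]. -/
import Mathlib


noncomputable section

open scoped BigOperators

/-- Defining relation of the first Weyl algebra: `y*x = x*y + 1`. -/
inductive WeylRel (F : Type) [Field F] :
    FreeAlgebra F (Fin 2) → FreeAlgebra F (Fin 2) → Prop
  | rel : WeylRel F (FreeAlgebra.ι F 1 * FreeAlgebra.ι F 0)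
      (FreeAlgebra.ι F 0 * FreeAlgebra.ι F 1 + 1)

/-- The first Weyl algebra `A₁(F)`. -/
abbrev Weyl (F : Type) [Field F] : Type := RingQuot (WeylRel F)

/-- The generator `x` of `A₁(F)`. -/
def Wx (F : Type) [Field F] : Weyl F :=
  RingQuot.mkAlgHom F (WeylRel F) (FreeAlgebra.ι F 0)

/-- The generator `y` of `A₁(F)`. -/
def Wy (F : Type) [Field F] : Weyl F :=
  RingQuot.mkAlgHom F (WeylRel F) (FreeAlgebra.ι F 1)

/-- The image in `A₁(F)` of the commutative polynomial `(X - Y)^n ∈ F[X,Y]`,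
obtained by expanding commutatively and substituting `x, y` in normal order. -/
def XmY (F : Type) [Field F] (n : ℕ) : Weyl F :=
  ∑ k ∈ Finset.range (n + 1),
    ((-1 : F) ^ k * (n.choose k : F)) • (Wx F ^ (n - k) * Wy F ^ k)

variable (F : Type) [Field F]

lemma w_rel : Wy F * Wx F = Wx F * Wy F + 1 := by
  have h := RingQuot.mkAlgHom_rel F (WeylRel.rel (F := F))
  simpa [Wx, Wy, map_mul, map_add, map_one] using h

lemma wy_mul_wx_pow : ∀ a : ℕ,
    Wy F * Wx F ^ a = Wx F ^ a * Wy F + ((a : ℕ) : F) • Wx F ^ (a - 1)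
  | 0 => by simp
  | 1 => by simpa using w_rel F
  | (b+2) => by
    have ih := wy_mul_wx_pow (b+1)
    show Wy F * Wx F ^ (b+2) = Wx F ^ (b+2) * Wy F + ((b+2 : ℕ) : F) • Wx F ^ (b+1)
    have ih' : Wy F * Wx F ^ (b+1) = Wx F ^ (b+1) * Wy F + ((b+1 : ℕ) : F) • Wx F ^ b := ih
    have e1 : Wy F * Wx F ^ (b+2) = (Wy F * Wx F ^ (b+1)) * Wx F := by
      rw [mul_assoc, ← pow_succ]
    rw [e1, ih', add_mul, mul_assoc, w_rel, smul_mul_assoc, ← pow_succ, mul_add, mul_one,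
        ← mul_assoc, ← pow_succ]
    have hc : ((b+2 : ℕ) : F) = ((b+1 : ℕ) : F) + 1 := by push_cast; ring
    rw [hc, add_smul, one_smul]
    abel

lemma wx_mul_wy_pow : ∀ b : ℕ,
    Wx F * Wy F ^ b = Wy F ^ b * Wx F - ((b : ℕ) : F) • Wy F ^ (b - 1)
  | 0 => by simp
  | 1 => by
    have h : Wx F * Wy F = Wy F * Wx F - 1 := by rw [w_rel]; abel
    simpa using h
  | (c+2) => by
    have ih : Wx F * Wy F ^ (c+1) = Wy F ^ (c+1) * Wx F - ((c+1 : ℕ) : F) • Wy F ^ c :=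
      wx_mul_wy_pow (c+1)
    show Wx F * Wy F ^ (c+2) = Wy F ^ (c+2) * Wx F - ((c+2 : ℕ) : F) • Wy F ^ (c+1)
    have hrel : Wx F * Wy F = Wy F * Wx F - 1 := by rw [w_rel]; abel
    have e1 : Wx F * Wy F ^ (c+2) = (Wx F * Wy F) * Wy F ^ (c+1) := by
      rw [mul_assoc, ← pow_succ']
    rw [e1, hrel, sub_mul, one_mul, mul_assoc, ih, mul_sub, mul_smul_comm,
        ← mul_assoc]
    simp only [← pow_succ']
    have hc : ((c+2 : ℕ) : F) = ((c+1 : ℕ) : F) + 1 := by push_cast; ring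
    rw [hc, add_smul, one_smul]
    abel

lemma wy_pow_mul_wx (k : ℕ) :
    Wy F ^ k * Wx F = Wx F * Wy F ^ k + ((k : ℕ) : F) • Wy F ^ (k - 1) := by
  rw [wx_mul_wy_pow]; abel

/-- `x` shifted past `XmY (m+1)`. -/
lemma wx_comm_XmY (m : ℕ) :
    Wx F * XmY F (m + 1) = XmY F (m + 1) * Wx F + ((m + 1 : ℕ) : F) • XmY F m := by
  have key : XmY F (m + 1) * Wx F
      = Wx F * XmY F (m + 1)
        + ∑ k ∈ Finset.range (m + 2),
            (((-1 : F) ^ k * ((m+1).choose k : F)) * ((k : ℕ) : F))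
              • (Wx F ^ (m + 1 - k) * Wy F ^ (k - 1)) := by
    unfold XmY
    rw [Finset.sum_mul, Finset.mul_sum, ← Finset.sum_add_distrib]
    refine Finset.sum_congr rfl ?_
    intro k hk
    have hk' : k ≤ m + 1 := by
      simpa using Nat.lt_succ_iff.mp (Finset.mem_range.mp hk)
    have hx : Wx F * Wx F ^ (m + 1 - k) = Wx F ^ (m + 1 - k) * Wx F := by
      rw [← pow_succ', ← pow_succ]
    rw [smul_mul_assoc, mul_assoc, wy_pow_mul_wx, mul_add, smul_add, mul_smul_comm,
        mul_smul_comm, smul_smul, ← mul_assoc, ← hx, ← mul_assoc]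
  have tail : ∑ k ∈ Finset.range (m + 2),
      (((-1 : F) ^ k * ((m+1).choose k : F)) * ((k : ℕ) : F))
        • (Wx F ^ (m + 1 - k) * Wy F ^ (k - 1))
      = -(((m + 1 : ℕ) : F) • XmY F m) := by
    rw [Finset.sum_range_succ']
    simp only [Nat.cast_zero, mul_zero, zero_smul, add_zero, Nat.add_sub_cancel]
    unfold XmY
    rw [Finset.smul_sum, ← Finset.sum_neg_distrib]
    refine Finset.sum_congr rfl ?_
    intro j hj
    have hsub : m + 1 - (j + 1) = m - j := by omega
    have hch : ((m+1).choose (j+1) * (j+1) : ℕ) = ((m+1) * m.choose j : ℕ) :=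
      (Nat.add_one_mul_choose_eq m j).symm
    have hcoef : ((-1 : F) ^ (j+1) * ((m+1).choose (j+1) : F)) * (((j+1 : ℕ)) : F)
        = -(((m + 1 : ℕ) : F) * ((-1 : F) ^ j * (m.choose j : F))) := by
      have : (((m+1).choose (j+1) : F)) * (((j+1 : ℕ)) : F)
          = ((m + 1 : ℕ) : F) * ((m.choose j : F)) := by
        exact_mod_cast congrArg (fun n : ℕ => (n : F)) hch
      rw [pow_succ]
      calc (-1 : F) ^ j * -1 * ((m+1).choose (j+1) : F) * ((j+1 : ℕ) : F)
          = -((-1 : F) ^ j * (((m+1).choose (j+1) : F) * ((j+1 : ℕ) : F))) := by ring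
        _ = -(((m + 1 : ℕ) : F) * ((-1 : F) ^ j * (m.choose j : F))) := by rw [this]; ring_nf
    rw [hsub, hcoef]
    module
  rw [key, tail]
  abel

/-- `y` shifted past `XmY (m+1)`. -/
lemma wy_comm_XmY (m : ℕ) :
    Wy F * XmY F (m + 1) = XmY F (m + 1) * Wy F + ((m + 1 : ℕ) : F) • XmY F m := by
  have key : Wy F * XmY F (m + 1)
      = XmY F (m + 1) * Wy F
        + ∑ k ∈ Finset.range (m + 2),
            (((-1 : F) ^ k * ((m+1).choose k : F)) * (((m + 1 - k : ℕ)) : F))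
              • (Wx F ^ (m - k) * Wy F ^ k) := by
    unfold XmY
    rw [Finset.sum_mul, Finset.mul_sum, ← Finset.sum_add_distrib]
    refine Finset.sum_congr rfl ?_
    intro k hk
    have hsub : m + 1 - k - 1 = m - k := by omega
    rw [mul_smul_comm, ← mul_assoc, wy_mul_wx_pow, hsub, add_mul, smul_mul_assoc,
        smul_add, smul_smul, smul_mul_assoc, mul_assoc, ← pow_succ',
        mul_assoc (Wx F ^ (m + 1 - k)) (Wy F ^ k) (Wy F), ← pow_succ]
  have tail : ∑ k ∈ Finset.range (m + 2),
      (((-1 : F) ^ k * ((m+1).choose k : F)) * (((m + 1 - k : ℕ)) : F))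
        • (Wx F ^ (m - k) * Wy F ^ k)
      = ((m + 1 : ℕ) : F) • XmY F m := by
    rw [Finset.sum_range_succ]
    simp only [Nat.sub_self, Nat.cast_zero, mul_zero, zero_smul, add_zero]
    unfold XmY
    rw [Finset.smul_sum]
    refine Finset.sum_congr rfl ?_
    intro k hk
    have hk' : k ≤ m := Nat.lt_succ_iff.mp (Finset.mem_range.mp hk)
    have hch : (m.choose k * (m + 1) : ℕ) = ((m+1).choose k * (m + 1 - k) : ℕ) :=
      Nat.choose_mul_succ_eq m k
    have hcoef : ((-1 : F) ^ k * ((m+1).choose k : F)) * (((m + 1 - k : ℕ)) : F)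
        = ((m + 1 : ℕ) : F) * ((-1 : F) ^ k * (m.choose k : F)) := by
      have : (((m+1).choose k : F)) * (((m + 1 - k : ℕ)) : F)
          = ((m.choose k : F)) * ((m + 1 : ℕ) : F) := by
        exact_mod_cast congrArg (fun n : ℕ => (n : F)) hch.symm
      calc ((-1 : F) ^ k * ((m+1).choose k : F)) * (((m + 1 - k : ℕ)) : F)
          = (-1 : F) ^ k * ((((m+1).choose k : F)) * (((m + 1 - k : ℕ)) : F)) := by ring
        _ = ((m + 1 : ℕ) : F) * ((-1 : F) ^ k * (m.choose k : F)) := by rw [this]; ring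
    rw [hcoef, mul_smul]
  rw [key, tail]

lemma comm_XmY (m : ℕ) :
    (Wx F - Wy F) * XmY F (m + 1) = XmY F (m + 1) * (Wx F - Wy F) := by
  rw [sub_mul, mul_sub, wx_comm_XmY, wy_comm_XmY]
  abel


/-- `x - y` commutes with the image of `(X-Y)^(2j)` for every `j ≥ 1`;
equivalently `[x - y, Σⱼ a_{2j} S̃_{2j}] = 0` for finitely supported scalars. -/
theorem x_sub_y_commutes (F : Type) [Field F] [CharZero F] :
    (∀ j : ℕ, 1 ≤ j →
      (Wx F - Wy F) * XmY F (2 * j) = XmY F (2 * j) * (Wx F - Wy F)) ∧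
    (∀ (J : ℕ) (a : ℕ → F),
      (Wx F - Wy F) * (∑ j ∈ Finset.Icc 1 J, a (2 * j) • XmY F (2 * j)) -
        (∑ j ∈ Finset.Icc 1 J, a (2 * j) • XmY F (2 * j)) * (Wx F - Wy F) = 0) := by
  have main : ∀ j : ℕ, 1 ≤ j →
      (Wx F - Wy F) * XmY F (2 * j) = XmY F (2 * j) * (Wx F - Wy F) := by
    intro j hj
    have h2 : 2 * j = (2 * j - 1) + 1 := by omega
    rw [h2]
    exact comm_XmY F (2 * j - 1)
  refine ⟨main, ?_⟩
  intro J a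
  rw [Finset.mul_sum, Finset.sum_mul, ← Finset.sum_sub_distrib]
  refine Finset.sum_eq_zero ?_
  intro j hj
  have hj1 : 1 ≤ j := (Finset.mem_Icc.mp hj).1
  rw [mul_smul_comm, smul_mul_assoc, main j hj1, sub_self]
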